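/- Let Ω be a density operator on H^{⊗M}, C the cyclic shift unitary with C^M = 1, X_k = Tr(C^k Ω), and P_j = (1/M) ∑_{k=0}^{M-1} ω^{−jk} X_k with ω = exp(2πi/M). If P₀ = 1 and P_j = 0 for all j ≠ 0, then C Ω = Ω. -/

import Mathlib

/-!
Fourier inversion turns the binned probabilities `P_j = δ_{j0}` into
`Tr(C^k Ω) = ∑_j ω^{jk} P_j = 1` for every `k < M`; in particular `Tr(C Ω) = Tr Ω`.
Writing `Ω = Bᴴ B`, unitarity of `C` gives
`Tr((C Bᴴ - Bᴴ)ᴴ (C Bᴴ - Bᴴ)) = 2 Tr Ω - 2 Re Tr(C Ω) = 0`, so `C Bᴴ = Bᴴ` and hence `C Ω = Ω`.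
-/

open Matrix Finset
open scoped ComplexOrder

/-- The cyclic shift unitary `C` on `H^{⊗M}`, represented as a matrix acting on the
tensor-product basis indexed by `Fin M → Fin d` (the `j`-th index is the basis label of
the `j`-th tensor factor).  It cyclically permutes the tensor factors, so that `Tr(C·(ρ₁⊗⋯⊗ρ_M)) = Tr(ρ₁⋯ρ_M)`. -/
def cyclicShift (d M : ℕ) : Matrix (Fin M → Fin d) (Fin M → Fin d) ℂ :=
  Matrix.of fun S T => if (∀ j, S j = T (finRotate M j)) then 1 else 0

section PrimitiveRoot

variable {K : Type*} [Field K] {ζ : K} {M : ℕ}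

theorem IsPrimitiveRoot.geom_sum_zpow_sub (hζ : IsPrimitiveRoot ζ M) {k l : ℕ} (hk : k < M)
    (hl : l < M) : ∑ j ∈ range M, (ζ ^ ((l : ℤ) - k)) ^ j = if k = l then (M : K) else 0 := by
  split_ifs with hkl
  · simp [hkl]
  have hroot : (ζ ^ ((l : ℤ) - k)) ^ M = 1 := by
    rw [← zpow_natCast, ← _root_.zpow_mul, mul_comm, _root_.zpow_mul, zpow_natCast,
      hζ.pow_eq_one, _root_.one_zpow]
  have hne : ζ ^ ((l : ℤ) - k) ≠ 1 := by
    rw [Ne, hζ.zpow_eq_one_iff_dvd]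
    intro hdvd
    have := Int.eq_zero_of_abs_lt_dvd hdvd (by rw [abs_lt]; omega)
    omega
  rw [geom_sum_eq hne, hroot, sub_self, zero_div]

theorem IsPrimitiveRoot.sum_pow_mul_inv_dft [CharZero K] (hζ : IsPrimitiveRoot ζ M) (X : ℕ → K)
    {l : ℕ} (hl : l < M) :
    ∑ j ∈ range M, ζ ^ (j * l) *
        ((M : K)⁻¹ * ∑ k ∈ range M, ζ ^ (-((j * k : ℕ) : ℤ)) * X k) = X l := by
  have hM : M ≠ 0 := by omega
  have hζ0 : ζ ≠ 0 := hζ.ne_zero hM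
  have hcoeff (j k : ℕ) : ζ ^ (j * l) * ζ ^ (-((j * k : ℕ) : ℤ)) = (ζ ^ ((l : ℤ) - k)) ^ j := by
    rw [← zpow_natCast, ← zpow_add₀ hζ0, ← zpow_natCast, ← _root_.zpow_mul]
    congr 1
    push_cast
    ring
  calc _ = ∑ k ∈ range M, (M : K)⁻¹ * ((∑ j ∈ range M, (ζ ^ ((l : ℤ) - k)) ^ j) * X k) := by
        simp_rw [mul_sum, sum_mul, mul_sum, ← hcoeff]
        rw [sum_comm]
        exact sum_congr rfl fun k _ => sum_congr rfl fun j _ => by ring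
    _ = X l := by
        rw [sum_congr rfl fun k hk => by rw [hζ.geom_sum_zpow_sub (mem_range.1 hk) hl]]
        simp [hl, hM]

end PrimitiveRoot

theorem Matrix.PosSemidef.mul_eq_self_of_trace_mul_eq {𝕜 n : Type*} [RCLike 𝕜] [Fintype n]
    [DecidableEq n] {U Ω : Matrix n n 𝕜} (hU : Uᴴ * U = 1) (hΩ : Ω.PosSemidef)
    (htr : (U * Ω).trace = Ω.trace) : U * Ω = Ω := by
  open scoped MatrixOrder in
  obtain ⟨B, rfl⟩ := CStarAlgebra.nonneg_iff_eq_star_mul_self.mp hΩ.nonneg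
  rw [star_eq_conjTranspose] at htr ⊢
  suffices U * Bᴴ = Bᴴ by rw [← mul_assoc, this]
  have hcyc : (B * U * Bᴴ).trace = (B * Bᴴ).trace := by
    rw [mul_assoc, trace_mul_comm, mul_assoc, htr, trace_mul_comm]
  have hcyc_star : (B * U * Bᴴ)ᴴ.trace = (B * Bᴴ).trace := by
    rw [trace_conjTranspose, hcyc, ← trace_conjTranspose, conjTranspose_mul,
      conjTranspose_conjTranspose]
  have expand : (U * Bᴴ - Bᴴ)ᴴ * (U * Bᴴ - Bᴴ) =
      B * (Uᴴ * U) * Bᴴ - (B * U * Bᴴ)ᴴ - B * U * Bᴴ + B * Bᴴ := by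
    simp only [conjTranspose_sub, conjTranspose_mul, conjTranspose_conjTranspose]
    noncomm_ring
  rw [← sub_eq_zero, ← trace_conjTranspose_mul_self_eq_zero_iff, expand, hU, mul_one, trace_add,
    trace_sub, trace_sub, hcyc_star, hcyc]
  abel

theorem cyclicShift_eq_permMatrix (d M : ℕ) :
    cyclicShift d M = Equiv.Perm.permMatrix ℂ ((finRotate M).arrowCongr (Equiv.refl (Fin d))) := by
  ext S T
  simp only [cyclicShift, of_apply, PEquiv.toMatrix_apply, Equiv.toPEquiv_apply, Option.mem_def,
    Option.some_inj, funext_iff, Equiv.arrowCongr_apply]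
  refine if_congr ((finRotate M).forall_congr_left.trans ?_) rfl rfl
  simp only [Function.comp_apply, Equiv.refl_apply, Equiv.apply_symm_apply]

theorem cyclicShift_conjTranspose_mul_self (d M : ℕ) :
    (cyclicShift d M)ᴴ * cyclicShift d M = 1 := by
  simp [cyclicShift_eq_permMatrix, ← permMatrix_mul]

theorem cyclicShift_eq_one_of_le_one {d M : ℕ} (hM : M ≤ 1) : cyclicShift d M = 1 := by
  have : Subsingleton (Fin M) := Fin.subsingleton_iff_le_one.2 hM
  simp [cyclicShift_eq_permMatrix, Subsingleton.elim (finRotate M) (Equiv.refl _)]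

theorem cyclic_invariant_of_binned_probs_general (d M : ℕ)
    (Ω : Matrix (Fin M → Fin d) (Fin M → Fin d) ℂ)
    (hpsd : Ω.PosSemidef)
    (hP : ∀ j < M,
      ((M : ℂ))⁻¹ * ∑ k ∈ Finset.range M,
          (Complex.exp (2 * Real.pi * Complex.I / M)) ^ (-((j * k : ℕ) : ℤ)) *
            ((cyclicShift d M) ^ k * Ω).trace
        = if j = 0 then 1 else 0) :
    cyclicShift d M * Ω = Ω := by
  obtain hM | hM := le_or_gt M 1
  · rw [cyclicShift_eq_one_of_le_one hM, one_mul]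
  have hω := Complex.isPrimitiveRoot_exp M (by omega)
  have hX (l : ℕ) (hl : l < M) : ((cyclicShift d M) ^ l * Ω).trace = 1 := by
    rw [← hω.sum_pow_mul_inv_dft (fun k => ((cyclicShift d M) ^ k * Ω).trace) hl,
      sum_congr rfl fun j hj => by rw [hP j (mem_range.1 hj)]]
    simp [Nat.zero_lt_of_lt hl]
  refine hpsd.mul_eq_self_of_trace_mul_eq (cyclicShift_conjTranspose_mul_self d M) ?_
  simpa only [pow_one, pow_zero, one_mul] using (hX 1 hM).trans (hX 0 (by omega)).symm

/-- Conversely, if the binned probabilities `P_j = (1/M) ∑_k ω^{-jk} X_k`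
(with `X_k = Tr(C^k Ω)` and `ω = exp(2πi/M)`) of a density operator `Ω` on `H^{⊗M}`
satisfy `P₀ = 1` and `P_j = 0` for all `j ≠ 0`, then `C Ω = Ω`. -/
theorem cyclic_invariant_of_binned_probs (d M : ℕ) (hM : 1 ≤ M)
    (Ω : Matrix (Fin M → Fin d) (Fin M → Fin d) ℂ)
    (hpsd : Ω.PosSemidef) (htr : Ω.trace = 1)
    (hP : ∀ j < M,
      ((M : ℂ))⁻¹ * ∑ k ∈ Finset.range M,
          (Complex.exp (2 * Real.pi * Complex.I / M)) ^ (-((j * k : ℕ) : ℤ)) *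
            ((cyclicShift d M) ^ k * Ω).trace
        = if j = 0 then 1 else 0) :
    cyclicShift d M * Ω = Ω :=
  cyclic_invariant_of_binned_probs_general d M Ω hpsd hP
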